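/- (Onsager reciprocal relation L₁₂ = L₂₁ for cylindrical electrokinetics.) Let a, μ, ε > 0 and ze ∈ ℝ. Let φ : [0,a] → ℝ be C² with φ(a) = 0, and let q : [0,a] → ℝ be continuous and satisfy the radial Poisson equation −ε( φ''(r) + φ'(r)/r ) = ze q(r) for r ∈ (0,a) (q represents the net charge density p − n). Define the cross coefficients L₁₂ := (1/(2μa²)) ∫₀^a r · ze q(r) · (a² − r²) dr and L₂₁ := (2ε/(μa²)) ∫₀^a φ(r) r dr. Then L₁₂ = L₂₁; i.e., the linear response matrix relating the electric current density J_e and fluid flux J_f to the driving forces (E_z, −∂Π/∂z) is symmetric. -/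

import Mathlib

/-!
Multiplying the Poisson equation by `r` gives `ze r q = -ε (r φ')'`, so `L₁₂` is `-ε/(2μa²)` times
`∫₀^a (r φ')' (a² - r²) dr`. Integrating by parts twice, all boundary terms vanish (the weight
`a² - r²` at `r = a`, the factor `r` at `r = 0`, and `φ(a) = 0`), leaving `-4 ∫₀^a φ r dr`.
-/

open Set intervalIntegral Filter Topology

theorem ContDiffOn.hasDerivAt_derivWithin {f : ℝ → ℝ} {s : Set ℝ} {n : WithTop ℕ∞}
    (hf : ContDiffOn ℝ n f s) (hn : n ≠ 0) {x : ℝ} (hs : s ∈ 𝓝 x) :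
    HasDerivAt f (derivWithin f s x) x :=
  (hf.differentiableOn hn x (mem_of_mem_nhds hs)).hasDerivWithinAt.hasDerivAt hs

theorem deriv_eventuallyEq_derivWithin {f : ℝ → ℝ} {s : Set ℝ} {x : ℝ} (hs : s ∈ 𝓝 x) :
    deriv f =ᶠ[𝓝 x] derivWithin f s := by
  filter_upwards [eventually_mem_nhds_iff.mpr hs] with y hy
  exact (derivWithin_of_mem_nhds hy).symm

/-- Here `ψ` and `ψ₂` play the roles of `φ'` and `φ''`, so the integrand is `(r φ')' (a² - r²)`. -/
theorem integral_deriv_mul_radial_weight {a : ℝ} (ha : 0 ≤ a) {φ ψ ψ₂ : ℝ → ℝ}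
    (hφc : ContinuousOn φ (Icc 0 a)) (hψc : ContinuousOn ψ (Icc 0 a))
    (hψ₂c : ContinuousOn ψ₂ (Icc 0 a))
    (hφ : ∀ r ∈ Ioo 0 a, HasDerivAt φ (ψ r) r) (hψ : ∀ r ∈ Ioo 0 a, HasDerivAt ψ (ψ₂ r) r)
    (hφa : φ a = 0) :
    ∫ r in 0..a, (ψ r + r * ψ₂ r) * (a ^ 2 - r ^ 2) = -4 * ∫ r in 0..a, φ r * r := by
  have hcont : ∀ {f : ℝ → ℝ}, ContinuousOn f (Icc 0 a) →
      IntervalIntegrable f MeasureTheory.volume 0 a := fun hf => hf.intervalIntegrable_of_Icc ha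
  -- `H` collects the boundary terms of both integrations by parts; it vanishes at `0` and at `a`.
  let H : ℝ → ℝ := fun r => (a ^ 2 - r ^ 2) * r * ψ r + 2 * r ^ 2 * φ r
  have hH : ∀ r ∈ Ioo 0 a,
      HasDerivAt H ((ψ r + r * ψ₂ r) * (a ^ 2 - r ^ 2) + 4 * (φ r * r)) r := by
    intro r hr
    have hpoly : HasDerivAt (fun r : ℝ => (a ^ 2 - r ^ 2) * r) (a ^ 2 - 3 * r ^ 2) r :=
      (((hasDerivAt_pow 2 r).const_sub (a ^ 2)).mul (hasDerivAt_id r)).congr_deriv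
        (by simp only [Nat.cast_ofNat, Nat.add_one_sub_one, pow_one, id_eq]; ring)
    exact ((hpoly.mul (hψ r hr)).add (((hasDerivAt_pow 2 r).const_mul 2).mul (hφ r hr))).congr_deriv
      (by simp only [Nat.cast_ofNat, Nat.add_one_sub_one, pow_one]; ring)
  have hFTC := integral_eq_sub_of_hasDerivAt_of_le ha (by fun_prop) hH
    (hcont (by fun_prop))
  rw [integral_add (hcont (by fun_prop)) (hcont (by fun_prop)), integral_const_mul] at hFTC
  simp only [H, hφa] at hFTC
  linarith

theorem integral_radial_laplacian_mul_radial_weight {a : ℝ} (ha : 0 < a) {φ : ℝ → ℝ}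
    (hφ : ContDiffOn ℝ 2 φ (Icc 0 a)) (hφa : φ a = 0) :
    ∫ r in 0..a, r * (deriv (deriv φ) r + deriv φ r / r) * (a ^ 2 - r ^ 2)
      = -4 * ∫ r in 0..a, φ r * r := by
  have hIcc : UniqueDiffOn ℝ (Icc (0 : ℝ) a) := uniqueDiffOn_Icc ha
  set ψ := derivWithin φ (Icc 0 a)
  have hψ : ContDiffOn ℝ 1 ψ (Icc 0 a) := hφ.derivWithin hIcc (by norm_num)
  set ψ₂ := derivWithin ψ (Icc 0 a)
  have hψ₂ : ContinuousOn ψ₂ (Icc 0 a) := (hψ.derivWithin (m := 0) hIcc le_rfl).continuousOn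
  have hnhds : ∀ r ∈ Ioo 0 a, Icc 0 a ∈ 𝓝 r := fun r hr => Icc_mem_nhds hr.1 hr.2
  rw [← integral_deriv_mul_radial_weight ha.le hφ.continuousOn hψ.continuousOn hψ₂
    (fun r hr => hφ.hasDerivAt_derivWithin (by norm_num) (hnhds r hr))
    (fun r hr => hψ.hasDerivAt_derivWithin one_ne_zero (hnhds r hr)) hφa]
  refine integral_congr_Ioo_of_le ha.le fun r hr => ?_
  have hφ' : deriv φ r = ψ r := derivWithin_of_mem_nhds (hnhds r hr) |>.symm
  have hφ'' : deriv (deriv φ) r = ψ₂ r := by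
    rw [(deriv_eventuallyEq_derivWithin (hnhds r hr)).deriv_eq,
      ← derivWithin_of_mem_nhds (hnhds r hr)]
  rw [hφ', hφ'']
  field_simp [hr.1.ne']
  ring

theorem onsager_reciprocal_relation_cylindrical_general
    (a μ ε : ℝ) (ha : 0 < a) (ze : ℝ)
    (φ : ℝ → ℝ) (hφ : ContDiffOn ℝ 2 φ (Icc 0 a)) (hφa : φ a = 0)
    (q : ℝ → ℝ)
    (hPoisson : ∀ r ∈ Ioo (0 : ℝ) a,
      -(ε * (deriv (deriv φ) r + deriv φ r / r)) = ze * q r) :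
    (1 / (2 * μ * a ^ 2)) * ∫ r in (0 : ℝ)..a, r * (ze * q r) * (a ^ 2 - r ^ 2)
      = (2 * ε / (μ * a ^ 2)) * ∫ r in (0 : ℝ)..a, φ r * r := by
  have hL₁₂ : ∫ r in (0 : ℝ)..a, r * (ze * q r) * (a ^ 2 - r ^ 2)
      = -ε * ∫ r in (0 : ℝ)..a, r * (deriv (deriv φ) r + deriv φ r / r) * (a ^ 2 - r ^ 2) := by
    rw [← integral_const_mul]
    refine integral_congr_Ioo_of_le ha.le fun r hr => ?_
    rw [← hPoisson r hr]
    ring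
  rw [hL₁₂, integral_radial_laplacian_mul_radial_weight ha hφ hφa]
  ring

/-- **Onsager reciprocal relation `L₁₂ = L₂₁` for cylindrical electrokinetics.**
With the radial Poisson equation `−ε(φ'' + φ'/r) = ze q(r)` on `(0,a)` and `φ(a) = 0`,
the cross coefficients
`L₁₂ = (1/(2μa²)) ∫₀^a r (ze q(r)) (a² − r²) dr` and
`L₂₁ = (2ε/(μa²)) ∫₀^a φ(r) r dr`
of the linear response matrix are equal: the matrix relating `(J_e, J_f)` to
`(E_z, −∂Π/∂z)` is symmetric. -/
theorem onsager_reciprocal_relation_cylindrical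
    (a μ ε : ℝ) (ha : 0 < a) (hμ : 0 < μ) (hε : 0 < ε) (ze : ℝ)
    (φ : ℝ → ℝ) (hφ : ContDiffOn ℝ 2 φ (Icc 0 a)) (hφa : φ a = 0)
    (q : ℝ → ℝ) (hq : ContinuousOn q (Icc 0 a))
    (hPoisson : ∀ r ∈ Ioo (0 : ℝ) a,
      -(ε * (deriv (deriv φ) r + deriv φ r / r)) = ze * q r) :
    (1 / (2 * μ * a ^ 2)) * ∫ r in (0 : ℝ)..a, r * (ze * q r) * (a ^ 2 - r ^ 2)
      = (2 * ε / (μ * a ^ 2)) * ∫ r in (0 : ℝ)..a, φ r * r :=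
  onsager_reciprocal_relation_cylindrical_general a μ ε ha ze φ hφ hφa q hPoisson
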